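/- Thomas' estimate in dimension 1: let β = 1/2, ρ > 0, and k = 2π(iρ + 1/2). Then for every m ∈ ℤ, |(2πm + k)²| ≥ 4π²ρ, i.e., the symbol of the free operator (D+k)² on the circle is invertible with inverse bounded by (4π²ρ)^{-1}. -/

import Mathlib

open Complex

/-
With z = 2πm + k = π(2m + 1) + 2πρ i, the imaginary part of z² is 2 Re z Im z = 4π²ρ(2m + 1),
and |2m + 1| ≥ 1 because 2m + 1 is an odd integer; the norm of z² dominates its imaginary part.
-/

theorem Complex.two_mul_abs_re_mul_abs_im_le_norm_sq (z : ℂ) :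
    2 * |z.re| * |z.im| ≤ ‖z ^ 2‖ := by
  have him : (z ^ 2).im = 2 * z.re * z.im := by rw [sq, mul_im]; ring
  calc 2 * |z.re| * |z.im| = |(z ^ 2).im| := by rw [him, abs_mul, abs_mul, abs_two]
    _ ≤ ‖z ^ 2‖ := abs_im_le_norm _

theorem Int.one_le_abs_two_mul_add_one (m : ℤ) : (1 : ℝ) ≤ |2 * (m : ℝ) + 1| := by
  have h : (1 : ℤ) ≤ |2 * m + 1| := Int.one_le_abs (by omega)
  exact_mod_cast h

theorem thomas_estimate_dim_one_general (ρ : ℝ) (m : ℤ) :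
    4 * Real.pi ^ 2 * ρ
      ≤ ‖((2 * Real.pi * (m : ℝ) : ℂ)
          + 2 * Real.pi * (ρ * Complex.I + 1 / 2)) ^ 2‖ := by
  set z : ℂ := (2 * Real.pi * (m : ℝ) : ℂ) + 2 * Real.pi * (ρ * Complex.I + 1 / 2)
  have hz : z = (Real.pi * (2 * m + 1) : ℝ) + (2 * Real.pi * ρ : ℝ) * I := by
    simp only [z]; push_cast; ring
  have hre : z.re = Real.pi * (2 * m + 1) := by simp [hz]
  have him : z.im = 2 * Real.pi * ρ := by simp [hz]
  calc 4 * Real.pi ^ 2 * ρ ≤ 4 * Real.pi ^ 2 * |ρ| * 1 := by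
        rw [mul_one]; gcongr; exact le_abs_self ρ
    _ ≤ 4 * Real.pi ^ 2 * |ρ| * |2 * (m : ℝ) + 1| := by
        gcongr; exact Int.one_le_abs_two_mul_add_one m
    _ = 2 * |z.re| * |z.im| := by
        rw [hre, him, abs_mul, abs_mul, abs_mul, abs_two, abs_of_pos Real.pi_pos]; ring
    _ ≤ ‖z ^ 2‖ := z.two_mul_abs_re_mul_abs_im_le_norm_sq

theorem thomas_estimate_dim_one (ρ : ℝ) (hρ : 0 < ρ) (m : ℤ) :
    4 * Real.pi ^ 2 * ρ
      ≤ ‖((2 * Real.pi * (m : ℝ) : ℂ)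
          + 2 * Real.pi * (ρ * Complex.I + 1 / 2)) ^ 2‖ :=
  thomas_estimate_dim_one_general ρ m
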